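/- Let A be a max-automaton with k counters and let m ≥ 0. The index of ≡_m^ops (its number of equivalence classes on Λ^*) is at most (m+2)^{2(k²+k)}. -/
import Mathlib


/-- Counter operations over a set `C` of counters. -/
inductive CounterOp (C : Type*) where
  | inc : C → CounterOp C
  | reset : C → CounterOp C
  | max : C → C → C → CounterOp C

/-- Applying a single counter operation to a counter valuation. -/
def applyOp {C : Type*} [DecidableEq C] (ν : C → ℕ) : CounterOp C → C → ℕ
  | .inc c => Function.update ν c (ν c + 1)
  | .reset c => Function.update ν c 0
  | .max c c₀ c₁ => Function.update ν c (Nat.max (ν c₀) (ν c₁))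

/-- Applying a finite sequence of counter operations to a counter valuation. -/
def applyOps {C : Type*} [DecidableEq C] (ν : C → ℕ) : List (CounterOp C) → C → ℕ
  | [] => ν
  | op :: π => applyOps (applyOp ν op) π

/-- The transfer relation of a single counter operation. -/
def opTransfers {C : Type*} : CounterOp C → C → C → Prop
  | .inc _, c, d => c = d
  | .reset e, c, d => c = d ∧ c ≠ e
  | .max e c₀ c₁, c, d => (c = d ∧ c ≠ e) ∨ ((c = c₀ ∨ c = c₁) ∧ d = e)

/-- `Transfers π c d`: the sequence `π` of counter operations transfers counter `c`
to counter `d`. -/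
def Transfers {C : Type*} : List (CounterOp C) → C → C → Prop
  | [], c, d => c = d
  | op :: π, c, d => ∃ e, opTransfers op c e ∧ Transfers π e d

/-- `TransfersWith π c d m`: `π` transfers `c` to `d` with `m` increments, i.e. `π`
decomposes as `π₀ (inc e₁) π₁ ⋯ (inc e_m) π_m` with `π₀` transferring `c` to `e₁`,
`π_j` transferring `e_j` to `e_{j+1}`, and `π_m` transferring `e_m` to `d`. -/
inductive TransfersWith {C : Type*} : List (CounterOp C) → C → C → ℕ → Prop where
  | zero {π : List (CounterOp C)} {c d : C} :
      Transfers π c d → TransfersWith π c d 0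
  | step {π₀ π : List (CounterOp C)} {c e d : C} {m : ℕ} :
      Transfers π₀ c e → TransfersWith π e d m →
      TransfersWith (π₀ ++ CounterOp.inc e :: π) c d (m + 1)

/-- `π` is a `c`-trace of length `m`: it transfers some counter to `c` with `m` increments. -/
def IsTrace {C : Type*} (π : List (CounterOp C)) (c : C) (m : ℕ) : Prop :=
  ∃ c', TransfersWith π c' c m

/-- A (deterministic, complete) max-automaton with states `Q`, counters `C` and
input alphabet `S`: each transition is labeled by a finite sequence of counter
operations, and the acceptance condition is a boolean combination of the
per-counter conditions "`limsup ρ_c < ∞`". -/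
structure MaxAutomaton (S Q C : Type*) where
  init : Q
  step : Q → S → Q
  label : Q → S → List (CounterOp C)
  acc : (C → Prop) → Prop

namespace MaxAutomaton

variable {S Q C : Type*}

/-- The state of the (unique) run on `α` after `n` letters. -/
def stateAt (A : MaxAutomaton S Q C) (α : ℕ → S) : ℕ → Q
  | 0 => A.init
  | n + 1 => A.step (stateAt A α n) (α n)

/-- The counter valuation reached on the run on `α` after applying all operations
of the first `n` transition labels, starting from the zero valuation. -/
def valSeq [DecidableEq C] (A : MaxAutomaton S Q C) (α : ℕ → S) : ℕ → C → ℕ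
  | 0 => fun _ => 0
  | n + 1 => applyOps (valSeq A α n) (A.label (stateAt A α n) (α n))

/-- The run of `A` on `α` is accepting iff the acceptance condition is satisfied by
the assignment mapping counter `c` to true iff `limsup ρ_c < ∞`. -/
def Accepts [DecidableEq C] (A : MaxAutomaton S Q C) (α : ℕ → S) : Prop :=
  A.acc fun c => Filter.limsup (fun n => ((valSeq A α n c : ℕ) : ℕ∞)) Filter.atTop < ⊤

/-- The language of the max-automaton `A`. -/
def Lang [DecidableEq C] (A : MaxAutomaton S Q C) : Set (ℕ → S) :=
  { α | A.Accepts α }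

/-- The flattening of the labels of the first `n` transitions of the run of `A` on `α`. -/
def labelSeq (A : MaxAutomaton S Q C) (α : ℕ → S) : ℕ → List (CounterOp C)
  | 0 => []
  | n + 1 => labelSeq A α n ++ A.label (stateAt A α n) (α n)

/-- The run of `A` on `α` contains `π`: some prefix of the run ends with `π`. -/
def RunContains (A : MaxAutomaton S Q C) (α : ℕ → S) (π : List (CounterOp C)) : Prop :=
  ∃ n, π <:+ A.labelSeq α n

/-- The extended transition function `δ* : Q × Σ* → Q`. -/
def extStep (A : MaxAutomaton S Q C) : Q → List S → Q
  | q, [] => q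
  | q, a :: x => extStep A (A.step q a) x

/-- `ℓ(q, x)`: the sequence of transition labels along the run of `A` on `x` from `q`. -/
def labelsFrom (A : MaxAutomaton S Q C) : Q → List S → List (List (CounterOp C))
  | _, [] => []
  | q, a :: x => A.label q a :: labelsFrom A (A.step q a) x

end MaxAutomaton

/-- The flattening of a sequence of transition labels into a single sequence of
counter operations. -/
def flatLabels {C : Type*} (l : List (List (CounterOp C))) : List (CounterOp C) :=
  l.foldr (· ++ ·) []

/-- `l` has an infix whose flattening has a suffix that is a `c`-trace of length `m`. -/
def CondInfixTrace {C : Type*} (l : List (List (CounterOp C))) (c : C) (m : ℕ) : Prop :=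
  ∃ μ, μ <:+: l ∧ ∃ π, π <:+ flatLabels μ ∧ IsTrace π c m

/-- The flattening of `l` has a suffix that is a `c`-trace of length `m`. -/
def CondSuffixTrace {C : Type*} (l : List (List (CounterOp C))) (c : C) (m : ℕ) : Prop :=
  ∃ π, π <:+ flatLabels l ∧ IsTrace π c m

/-- The flattening of `l` transfers `c` to `d` with `m` increments. -/
def CondTransfer {C : Type*} (l : List (List (CounterOp C))) (c d : C) (m : ℕ) : Prop :=
  TransfersWith (flatLabels l) c d m

/-- `l` has a prefix whose flattening transfers `c` to `d` with `m` increments. -/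
def CondPrefixTransfer {C : Type*} (l : List (List (CounterOp C))) (c d : C) (m : ℕ) : Prop :=
  ∃ μ, μ <+: l ∧ TransfersWith (flatLabels μ) c d m

/-- The equivalence `≡_m^ops` on sequences of transition labels. -/
def EqOps {C : Type*} (m : ℕ) (l l' : List (List (CounterOp C))) : Prop :=
  ∀ (c d : C) (m' : ℕ), m' ≤ m →
    (CondInfixTrace l c m' ↔ CondInfixTrace l' c m') ∧
    (CondSuffixTrace l c m' ↔ CondSuffixTrace l' c m') ∧
    (CondTransfer l c d m' ↔ CondTransfer l' c d m') ∧
    (CondPrefixTransfer l c d m' ↔ CondPrefixTransfer l' c d m')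

/-- The equivalence `≡_m` on finite words: same transition profile and
`≡_m^ops`-equivalent label sequences from every state. -/
def EqWord {S Q C : Type*} (A : MaxAutomaton S Q C) (m : ℕ) (x x' : List S) : Prop :=
  (∀ q, A.extStep q x = A.extStep q x') ∧
  ∀ q, EqOps m (A.labelsFrom q x) (A.labelsFrom q x')


section Aux
open Classical

variable {C : Type*}

lemma transfers_append {σ π : List (CounterOp C)} {c e d : C}
    (h1 : Transfers σ c e) (h2 : Transfers π e d) : Transfers (σ ++ π) c d := by
  induction σ generalizing c with
  | nil => cases h1; exact h2
  | cons op σ ih =>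
    obtain ⟨f, hop, htr⟩ := h1
    exact ⟨f, hop, ih htr⟩

lemma transfersWith_append {σ π : List (CounterOp C)} {c e d : C} {m : ℕ}
    (h1 : Transfers σ c e) (h2 : TransfersWith π e d m) :
    TransfersWith (σ ++ π) c d m := by
  induction h2 generalizing σ c with
  | zero h => exact .zero (transfers_append h1 h)
  | @step π₀ π c' e' d' m h' hw ih =>
    rw [← List.append_assoc]
    exact .step (transfers_append h1 h') hw

lemma transfersWith_pred {π : List (CounterOp C)} {c d : C} {m : ℕ}
    (h : TransfersWith π c d (m + 1)) : TransfersWith π c d m := by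
  cases h with
  | @step π₀ π c e d m h1 h2 =>
    have he : Transfers (π₀ ++ [CounterOp.inc e]) c e :=
      transfers_append h1 ⟨e, rfl, rfl⟩
    have := transfersWith_append he h2
    simpa using this

lemma transfersWith_sub {π : List (CounterOp C)} {c d : C} {m' : ℕ} :
    ∀ n, TransfersWith π c d (m' + n) → TransfersWith π c d m'
  | 0, h => h
  | n + 1, h => transfersWith_sub n (transfersWith_pred h)

lemma transfersWith_anti {π : List (CounterOp C)} {c d : C} {m m' : ℕ}
    (hle : m' ≤ m) (h : TransfersWith π c d m) : TransfersWith π c d m' := by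
  obtain ⟨n, rfl⟩ := Nat.exists_eq_add_of_le hle
  exact transfersWith_sub n h

lemma isTrace_anti {π : List (CounterOp C)} {c : C} {m m' : ℕ}
    (hle : m' ≤ m) (h : IsTrace π c m) : IsTrace π c m' := by
  obtain ⟨c', h⟩ := h; exact ⟨c', transfersWith_anti hle h⟩

lemma condInfixTrace_anti {l : List (List (CounterOp C))} {c : C} {m m' : ℕ}
    (hle : m' ≤ m) (h : CondInfixTrace l c m) : CondInfixTrace l c m' := by
  obtain ⟨μ, h1, π, h2, h3⟩ := h; exact ⟨μ, h1, π, h2, isTrace_anti hle h3⟩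

lemma condSuffixTrace_anti {l : List (List (CounterOp C))} {c : C} {m m' : ℕ}
    (hle : m' ≤ m) (h : CondSuffixTrace l c m) : CondSuffixTrace l c m' := by
  obtain ⟨π, h2, h3⟩ := h; exact ⟨π, h2, isTrace_anti hle h3⟩

lemma condTransfer_anti {l : List (List (CounterOp C))} {c d : C} {m m' : ℕ}
    (hle : m' ≤ m) (h : CondTransfer l c d m) : CondTransfer l c d m' :=
  transfersWith_anti hle h

lemma condPrefixTransfer_anti {l : List (List (CounterOp C))} {c d : C} {m m' : ℕ}
    (hle : m' ≤ m) (h : CondPrefixTransfer l c d m) : CondPrefixTransfer l c d m' := by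
  obtain ⟨μ, h1, h2⟩ := h; exact ⟨μ, h1, transfersWith_anti hle h2⟩

/-- Count of `m' ≤ m` satisfying `P`. -/
noncomputable def cnt (m : ℕ) (P : ℕ → Prop) : ℕ :=
  ((Finset.range (m + 1)).filter P).card

lemma cnt_lt (m : ℕ) (P : ℕ → Prop) : cnt m P < m + 2 :=
  Nat.lt_succ_of_le ((Finset.card_filter_le _ _).trans_eq (Finset.card_range _))

lemma cnt_spec {m : ℕ} {P : ℕ → Prop} (hP : ∀ {a b}, a ≤ b → P b → P a)
    {m' : ℕ} (hm' : m' ≤ m) : P m' ↔ m' < cnt m P := by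
  classical
  constructor
  · intro h
    have hsub : Finset.range (m' + 1) ⊆ (Finset.range (m + 1)).filter P := by
      intro i hi
      rw [Finset.mem_range] at hi
      refine Finset.mem_filter.2 ⟨Finset.mem_range.2 (by omega), hP (by omega) h⟩
    calc m' < m' + 1 := Nat.lt_succ_self _
    _ = (Finset.range (m' + 1)).card := (Finset.card_range _).symm
    _ ≤ _ := Finset.card_le_card hsub
  · intro h
    by_contra hne
    have hsub : (Finset.range (m + 1)).filter P ⊆ Finset.range m' := by
      intro i hi
      rw [Finset.mem_filter] at hi
      rw [Finset.mem_range]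
      by_contra hge
      exact hne (hP (by omega) hi.2)
    have hcard := (Finset.card_le_card hsub).trans_eq (Finset.card_range m')
    unfold cnt at h
    omega

lemma cnt_congr {m : ℕ} {P Q : ℕ → Prop} (h : ∀ m' ≤ m, (P m' ↔ Q m')) :
    cnt m P = cnt m Q := by
  classical
  unfold cnt
  congr 1
  apply Finset.filter_congr
  intro i hi
  rw [Finset.mem_range] at hi
  simpa using h i (by omega)

/-- The profile of a label sequence. -/
noncomputable def profile (m : ℕ) (l : List (List (CounterOp C))) :
    (C → Fin (m + 2)) × (C → Fin (m + 2)) × (C × C → Fin (m + 2)) × (C × C → Fin (m + 2)) :=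
  (fun c => ⟨cnt m (CondInfixTrace l c), cnt_lt _ _⟩,
   fun c => ⟨cnt m (CondSuffixTrace l c), cnt_lt _ _⟩,
   fun p => ⟨cnt m (CondTransfer l p.1 p.2), cnt_lt _ _⟩,
   fun p => ⟨cnt m (CondPrefixTransfer l p.1 p.2), cnt_lt _ _⟩)

lemma profile_respects {m : ℕ} {l l' : List (List (CounterOp C))} (h : EqOps m l l') :
    profile m l = profile m l' := by
  unfold profile
  refine Prod.ext ?_ (Prod.ext ?_ (Prod.ext ?_ ?_))
  · funext c; exact Fin.ext (cnt_congr fun m' hm' => (h c c m' hm').1)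
  · funext c; exact Fin.ext (cnt_congr fun m' hm' => (h c c m' hm').2.1)
  · funext p; exact Fin.ext (cnt_congr fun m' hm' => (h p.1 p.2 m' hm').2.2.1)
  · funext p; exact Fin.ext (cnt_congr fun m' hm' => (h p.1 p.2 m' hm').2.2.2)

lemma eqOps_of_profile_eq {m : ℕ} {l l' : List (List (CounterOp C))}
    (h : profile m l = profile m l') : EqOps m l l' := by
  have h1 := congrArg Prod.fst h
  have h2 := congrArg (fun p => p.2.1) h
  have h3 := congrArg (fun p => p.2.2.1) h
  have h4 := congrArg (fun p => p.2.2.2) h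
  simp only [profile] at h1 h2 h3 h4
  intro c d m' hm'
  refine ⟨?_, ?_, ?_, ?_⟩
  · rw [cnt_spec (fun hab => condInfixTrace_anti hab) hm',
      cnt_spec (fun hab => condInfixTrace_anti hab) hm',
      show cnt m (CondInfixTrace l c) = cnt m (CondInfixTrace l' c) from
        congrArg Fin.val (congrFun h1 c)]
  · rw [cnt_spec (fun hab => condSuffixTrace_anti hab) hm',
      cnt_spec (fun hab => condSuffixTrace_anti hab) hm',
      show cnt m (CondSuffixTrace l c) = cnt m (CondSuffixTrace l' c) from
        congrArg Fin.val (congrFun h2 c)]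
  · rw [cnt_spec (fun hab => condTransfer_anti hab) hm',
      cnt_spec (fun hab => condTransfer_anti hab) hm',
      show cnt m (CondTransfer l c d) = cnt m (CondTransfer l' c d) from
        congrArg Fin.val (congrFun h3 (c, d))]
  · rw [cnt_spec (fun hab => condPrefixTransfer_anti hab) hm',
      cnt_spec (fun hab => condPrefixTransfer_anti hab) hm',
      show cnt m (CondPrefixTransfer l c d) = cnt m (CondPrefixTransfer l' c d) from
        congrArg Fin.val (congrFun h4 (c, d))]

end Aux

/-- The index of `≡_m^ops` is at most `(m+2)^(2(k²+k))` for `k` counters. -/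
theorem eqOps_index_le {C : Type*} [Fintype C] (k m : ℕ) (hk : Fintype.card C = k) :
    Cardinal.mk (Quot (EqOps (C := C) m)) ≤ (((m + 2) ^ (2 * (k ^ 2 + k)) : ℕ) : Cardinal) := by
  classical
  have hresp : ∀ l l' : List (List (CounterOp C)), EqOps m l l' →
      profile m l = profile m l' := fun _ _ h => profile_respects h
  set f : Quot (EqOps (C := C) m) →
      (C → Fin (m + 2)) × (C → Fin (m + 2)) × (C × C → Fin (m + 2)) × (C × C → Fin (m + 2)) :=
    Quot.lift (profile m) hresp with hf
  have hinj : Function.Injective f := by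
    intro x y
    induction x using Quot.ind with | _ l =>
    induction y using Quot.ind with | _ l' =>
    intro h
    exact Quot.sound (eqOps_of_profile_eq h)
  calc Cardinal.mk (Quot (EqOps (C := C) m)) ≤ _ := Cardinal.mk_le_of_injective hinj
    _ = _ := Cardinal.mk_fintype _
    _ = (((m + 2) ^ (2 * (k ^ 2 + k)) : ℕ) : Cardinal) := by
        congr 1
        simp [Fintype.card_prod, Fintype.card_fun, Fintype.card_fin, hk, ← pow_add]
        ring
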